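/- arXiv:2601.15148 — 3 statements merged into one kernel-verified Lean document; each statement's English description precedes it below -/
import Mathlib

section
/- Let a_1,…,a_n be positive integers with Σ_i a_i = 2B and let 0 < ε < 1. Consider the interval scheduling game with T = 3 and c = 2 in which S_1 consists of n jobs of length 1 with weights a_1,…,a_n together with one job of length 3 and weight ε, and S_2 consists of two jobs of length 1 and weight B each. Suppose player 2 places its two jobs at [0,1) and [2,3). Then there exists a placement of the jobs of S_1 under which every machine configuration of maximum profit covers all jobs of S_1 (giving player 1 utility 2B + ε under every tie-breaking rule) if and only if there exists a subset A' ⊆ {1,…,n} with Σ_{i∈A'} a_i = B. -/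
open Classical

/-- An interval scheduling game: jobs `Fin n`, colors `Fin c`, horizon `[0, T)`,
and for each job a color, a length and a weight. -/
structure Game where
  n : ℕ
  c : ℕ
  T : ℝ
  T_pos : 0 < T
  color : Fin n → Fin c
  len : Fin n → ℝ
  wt : Fin n → ℝ
  len_nonneg : ∀ j, 0 ≤ len j
  len_le_T : ∀ j, len j ≤ T
  wt_nonneg : ∀ j, 0 ≤ wt j

/-- A strategy profile assigns a feasible start time to every job, so that job `j`
occupies `[start j, start j + len j) ⊆ [0, T)`. -/
structure Game.Profile (G : Game) where
  start : Fin G.n → ℝ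
  start_nonneg : ∀ j, 0 ≤ start j
  start_le : ∀ j, start j + G.len j ≤ G.T

/-- A machine configuration assigns a color to every time point. -/
abbrev Game.Config (G : Game) : Type := ℝ → Fin G.c

/-- Job `j` is covered if the machine is configured to its color throughout its
processing interval `[start j, start j + len j)`. -/
def Game.Covered (G : Game) (s : G.Profile) (γ : G.Config) (j : Fin G.n) : Prop :=
  ∀ t : ℝ, s.start j ≤ t → t < s.start j + G.len j → γ t = G.color j

/-- The profit of a configuration: total weight of covered jobs. -/
noncomputable def Game.profit (G : Game) (s : G.Profile) (γ : G.Config) : ℝ :=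
  ∑ j : Fin G.n, if G.Covered s γ j then G.wt j else 0

/-- The value of a profile: the maximal profit over machine configurations. -/
noncomputable def Game.val (G : Game) (s : G.Profile) : ℝ :=
  sSup {x : ℝ | ∃ γ : G.Config, x = G.profit s γ}

/-- The social optimum value: the maximal value over strategy profiles. -/
noncomputable def Game.valOPT (G : Game) : ℝ :=
  sSup {x : ℝ | ∃ s : G.Profile, x = G.val s}

/-- A tie-breaking rule selects, for every profile, a configuration of maximal profit. -/
structure Game.TieBreak (G : Game) where
  choice : G.Profile → G.Config
  choice_opt : ∀ s : G.Profile, G.profit s (choice s) = G.val s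

/-- Utility of player `i` under tie-breaking rule `M`: total weight of covered jobs
of color `i`. -/
noncomputable def Game.utility (G : Game) (M : G.TieBreak) (i : Fin G.c) (s : G.Profile) : ℝ :=
  ∑ j : Fin G.n, if G.color j = i ∧ G.Covered s (M.choice s) j then G.wt j else 0

/-- Nash equilibrium with respect to tie-breaking rule `M`: no player can strictly
increase its utility by relocating only the jobs of its own color. -/
def Game.IsNE (G : Game) (M : G.TieBreak) (s : G.Profile) : Prop :=
  ∀ (i : Fin G.c) (s' : G.Profile),
    (∀ j, G.color j ≠ i → s'.start j = s.start j) →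
      G.utility M i s' ≤ G.utility M i s

/-- The class `G_single`: exactly one job of each color (`n = c`). -/
def Game.Single (G : Game) : Prop := Function.Bijective G.color

lemma fin_sum_split {N n : ℕ} (hn : N = n + 3) (f : Fin N → ℝ) :
    ∑ j, f j = (∑ i : Fin n, f ⟨i, by omega⟩) + f ⟨n, by omega⟩ + f ⟨n+1, by omega⟩
      + f ⟨n+2, by omega⟩ := by
  subst hn
  rw [Fin.sum_univ_castSucc, Fin.sum_univ_castSucc, Fin.sum_univ_castSucc]
  rfl

lemma Game.profitSet_finite (G : Game) (s : G.Profile) :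
    {x : ℝ | ∃ γ : G.Config, x = G.profit s γ}.Finite := by
  classical
  have hsub : {x : ℝ | ∃ γ : G.Config, x = G.profit s γ} ⊆
      Set.range (fun b : Fin G.n → Bool => ∑ j : Fin G.n, if b j then G.wt j else 0) := by
    rintro x ⟨γ, rfl⟩
    refine ⟨fun j => if G.Covered s γ j then true else false, ?_⟩
    simp [Game.profit]
  exact (Set.finite_range _).subset hsub

lemma Game.profit_le_val (G : Game) (s : G.Profile) (γ : G.Config) :
    G.profit s γ ≤ G.val s :=
  le_csSup (Game.profitSet_finite G s).bddAbove ⟨γ, rfl⟩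

lemma Game.exists_profit_eq_val (G : Game) (s : G.Profile) (γ : G.Config) :
    ∃ γ' : G.Config, G.profit s γ' = G.val s := by
  have hne : {x : ℝ | ∃ γ : G.Config, x = G.profit s γ}.Nonempty := ⟨_, γ, rfl⟩
  obtain ⟨γ', hγ'⟩ := Set.Nonempty.csSup_mem hne (Game.profitSet_finite G s)
  exact ⟨γ', hγ'.symm⟩

lemma Game.val_le (G : Game) (s : G.Profile) (x : ℝ) (γ : G.Config)
    (h : ∀ γ' : G.Config, G.profit s γ' ≤ x) : G.val s ≤ x := by
  have hne : {x : ℝ | ∃ γ : G.Config, x = G.profit s γ}.Nonempty := ⟨_, γ, rfl⟩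
  apply csSup_le hne
  rintro y ⟨γ', rfl⟩; exact h γ'

/-- Reduction from Partition for best-response computation: with `T = 3`, player 1
owning unit jobs of weights `a 1, …, a n` and one job of length 3 and weight `ε`,
and player 2's two unit jobs of weight `B` placed at `[0,1)` and `[2,3)`, player 1
has a placement under which every profit-maximal configuration covers all of
player 1's jobs iff a subset of the `a i` sums to `B`. -/
theorem best_response_iff_partition (n : ℕ) (a : Fin n → ℕ) (ha : ∀ i, 0 < a i)
    (B : ℕ) (hsum : ∑ i, a i = 2 * B) (ε : ℝ) (hε1 : 0 < ε) (hε2 : ε < 1)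
    (G : Game) (hn : G.n = n + 3) (hc : G.c = 2) (hT : G.T = 3)
    (hcol : ∀ j : Fin G.n, (G.color j : ℕ) = if (j : ℕ) ≤ n then 0 else 1)
    (hlen : ∀ j : Fin G.n, G.len j = if (j : ℕ) = n then 3 else 1)
    (hwt : ∀ j : Fin G.n, G.wt j =
      if h : (j : ℕ) < n then (a ⟨(j : ℕ), h⟩ : ℝ)
      else if (j : ℕ) = n then ε else (B : ℝ)) :
    (∃ s : G.Profile,
        (∀ j : Fin G.n, (j : ℕ) = n + 1 → s.start j = 0) ∧
        (∀ j : Fin G.n, (j : ℕ) = n + 2 → s.start j = 2) ∧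
        (∀ γ : G.Config, G.profit s γ = G.val s →
          ∀ j : Fin G.n, (G.color j : ℕ) = 0 → G.Covered s γ j)) ↔
      ∃ A : Finset (Fin n), ∑ i ∈ A, a i = B := by
  have hnn : n < G.n := by omega
  have hn1 : n + 1 < G.n := by omega
  have hn2 : n + 2 < G.n := by omega
  have hiU : ∀ i : Fin n, (i : ℕ) < G.n := fun i => by omega
  have h0c : 0 < G.c := by omega
  have h1c : 1 < G.c := by omega
  have hc01 : (⟨0, h0c⟩ : Fin G.c) ≠ ⟨1, h1c⟩ := by simp [Fin.ext_iff]
  -- colors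
  have hcolU : ∀ (i : Fin n) (h : (i : ℕ) < G.n), G.color ⟨(i:ℕ), h⟩ = ⟨0, h0c⟩ := by
    intro i h
    apply Fin.ext
    rw [hcol]
    simp [Nat.le_of_lt i.isLt]
  have hcolL : ∀ (h : n < G.n), G.color ⟨n, h⟩ = ⟨0, h0c⟩ := by
    intro h; apply Fin.ext; rw [hcol]; simp
  have hcolP1 : ∀ (h : n + 1 < G.n), G.color ⟨n+1, h⟩ = ⟨1, h1c⟩ := by
    intro h; apply Fin.ext; rw [hcol]; simp
  have hcolP2 : ∀ (h : n + 2 < G.n), G.color ⟨n+2, h⟩ = ⟨1, h1c⟩ := by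
    intro h; apply Fin.ext; rw [hcol]; simp
  -- lengths
  have hlenU : ∀ (i : Fin n) (h : (i : ℕ) < G.n), G.len ⟨(i:ℕ), h⟩ = 1 := by
    intro i h; rw [hlen]; simp [Nat.ne_of_lt i.isLt]
  have hlenL : ∀ (h : n < G.n), G.len ⟨n, h⟩ = 3 := by
    intro h; rw [hlen]; simp
  have hlenP1 : ∀ (h : n + 1 < G.n), G.len ⟨n+1, h⟩ = 1 := by
    intro h; rw [hlen]; simp
  have hlenP2 : ∀ (h : n + 2 < G.n), G.len ⟨n+2, h⟩ = 1 := by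
    intro h; rw [hlen]; simp
  -- weights
  have hwtU : ∀ (i : Fin n) (h : (i : ℕ) < G.n), G.wt ⟨(i:ℕ), h⟩ = (a i : ℝ) := by
    intro i h; rw [hwt]; rw [dif_pos (show ((⟨(i:ℕ), h⟩ : Fin G.n) : ℕ) < n from i.isLt)]

  have hwtL : ∀ (h : n < G.n), G.wt ⟨n, h⟩ = ε := by
    intro h; rw [hwt]; simp
  have hwtP1 : ∀ (h : n + 1 < G.n), G.wt ⟨n+1, h⟩ = (B : ℝ) := by
    intro h; rw [hwt]; simp
  have hwtP2 : ∀ (h : n + 2 < G.n), G.wt ⟨n+2, h⟩ = (B : ℝ) := by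
    intro h; rw [hwt]; simp
  -- the profit formula
  have profit_eq : ∀ (s : G.Profile) (γ : G.Config), G.profit s γ =
      (∑ i : Fin n, if G.Covered s γ ⟨(i:ℕ), hiU i⟩ then (a i : ℝ) else 0)
      + (if G.Covered s γ ⟨n, hnn⟩ then ε else 0)
      + (if G.Covered s γ ⟨n+1, hn1⟩ then (B:ℝ) else 0)
      + (if G.Covered s γ ⟨n+2, hn2⟩ then (B:ℝ) else 0) := by
    intro s γ
    unfold Game.profit
    rw [fin_sum_split hn]
    simp only [hwtU, hwtL, hwtP1, hwtP2]
  -- total weight of unit jobs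
  have hsumR : ∑ i : Fin n, (a i : ℝ) = 2 * (B : ℝ) := by
    rw [← Nat.cast_sum, hsum]; push_cast; ring
  constructor
  · -- forward direction
    rintro ⟨s, hs1, hs2, hmax⟩
    have hstn : ∀ i : Fin n, 0 ≤ s.start ⟨(i:ℕ), hiU i⟩ := fun i => s.start_nonneg _
    have hst2 : ∀ i : Fin n, s.start ⟨(i:ℕ), hiU i⟩ ≤ 2 := by
      intro i
      have h := s.start_le ⟨(i:ℕ), hiU i⟩
      rw [hlenU i (hiU i), hT] at h; linarith
    have hsL : s.start ⟨n, hnn⟩ = 0 := by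
      have h1 := s.start_le ⟨n, hnn⟩
      have h2 := s.start_nonneg ⟨n, hnn⟩
      rw [hlenL hnn, hT] at h1; linarith
    have hsP1 : s.start ⟨n+1, hn1⟩ = 0 := hs1 _ rfl
    have hsP2 : s.start ⟨n+2, hn2⟩ = 2 := hs2 _ rfl
    have hcov0 : ∀ γ : G.Config, G.profit s γ = G.val s →
        (G.Covered s γ ⟨n, hnn⟩ ∧ ∀ i : Fin n, G.Covered s γ ⟨(i:ℕ), hiU i⟩) := by
      intro γ hγ
      refine ⟨hmax γ hγ _ ?_, fun i => hmax γ hγ _ ?_⟩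
      · rw [hcol]; simp
      · rw [hcol]; simp [Nat.le_of_lt i.isLt]
    -- step 1 : the value is 2B + ε
    obtain ⟨γs, hγs⟩ := Game.exists_profit_eq_val G s (fun _ => ⟨0, h0c⟩)
    have hcovs := hcov0 γs hγs
    have hγs0 : ∀ t : ℝ, 0 ≤ t → t < 3 → γs t = ⟨0, h0c⟩ := by
      intro t ht1 ht2
      have h := hcovs.1 t (by rw [hsL]; exact ht1) (by rw [hsL, hlenL hnn]; linarith)
      rw [h, hcolL hnn]
    have hncP1 : ¬ G.Covered s γs ⟨n+1, hn1⟩ := by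
      intro h
      have h0 := h 0 (by rw [hsP1]) (by rw [hsP1, hlenP1 hn1]; norm_num)
      rw [hγs0 0 le_rfl (by norm_num), hcolP1 hn1] at h0
      exact hc01 h0
    have hncP2 : ¬ G.Covered s γs ⟨n+2, hn2⟩ := by
      intro h
      have h0 := h 2 (by rw [hsP2]) (by rw [hsP2, hlenP2 hn2]; norm_num)
      rw [hγs0 2 (by norm_num) (by norm_num), hcolP2 hn2] at h0
      exact hc01 h0
    have hval : G.val s = 2 * (B:ℝ) + ε := by
      rw [← hγs, profit_eq s γs, if_pos hcovs.1, if_neg hncP1, if_neg hncP2,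
        Finset.sum_congr rfl (fun i _ => if_pos (hcovs.2 i)), hsumR]
      ring
    -- step 2 : config covering [0,1) with color 1
    set γ1 : G.Config := fun t => if 0 ≤ t ∧ t < 1 then ⟨1, h1c⟩ else ⟨0, h0c⟩ with hγ1def
    have hγ1in : ∀ t : ℝ, 0 ≤ t → t < 1 → γ1 t = ⟨1, h1c⟩ := by
      intro t h1 h2; simp only [hγ1def]; rw [if_pos ⟨h1, h2⟩]
    have hγ1out : ∀ t : ℝ, 1 ≤ t → γ1 t = ⟨0, h0c⟩ := by
      intro t h1; simp only [hγ1def]; rw [if_neg (by intro h; linarith [h.2])]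
    have hcovP1 : G.Covered s γ1 ⟨n+1, hn1⟩ := by
      intro t ht1 ht2
      rw [hsP1] at ht1; rw [hsP1, hlenP1 hn1] at ht2
      rw [hγ1in t ht1 (by linarith), hcolP1 hn1]
    have hncL1 : ¬ G.Covered s γ1 ⟨n, hnn⟩ := by
      intro h
      have h0 := h 0 (by rw [hsL]) (by rw [hsL, hlenL hnn]; norm_num)
      rw [hγ1in 0 le_rfl (by norm_num), hcolL hnn] at h0
      exact hc01 h0.symm
    have hncP21 : ¬ G.Covered s γ1 ⟨n+2, hn2⟩ := by
      intro h
      have h0 := h 2 (by rw [hsP2]) (by rw [hsP2, hlenP2 hn2]; norm_num)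
      rw [hγ1out 2 (by norm_num), hcolP2 hn2] at h0
      exact hc01 h0
    have hcovU1 : ∀ i : Fin n, G.Covered s γ1 ⟨(i:ℕ), hiU i⟩ ↔ 1 ≤ s.start ⟨(i:ℕ), hiU i⟩ := by
      intro i
      constructor
      · intro h
        by_contra hlt
        push_neg at hlt
        have h0 := h (s.start ⟨(i:ℕ), hiU i⟩) le_rfl
          (by rw [hlenU i (hiU i)]; linarith)
        rw [hγ1in _ (hstn i) hlt, hcolU i (hiU i)] at h0
        exact hc01 h0.symm
      · intro hle t ht1 ht2
        rw [hγ1out t (le_trans hle ht1), hcolU i (hiU i)]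
    have hlt1 : G.profit s γ1 < G.val s := by
      rcases lt_or_eq_of_le (Game.profit_le_val G s γ1) with h | h
      · exact h
      · exact absurd (hcov0 γ1 h).1 hncL1
    have hineq1 : (∑ i : Fin n, if 1 ≤ s.start ⟨(i:ℕ), hiU i⟩ then (a i : ℝ) else 0)
        + (B:ℝ) < 2 * B + ε := by
      have := hlt1
      rw [profit_eq s γ1, if_neg hncL1, if_pos hcovP1, if_neg hncP21, hval,
        Finset.sum_congr rfl (fun i _ => if_congr (hcovU1 i) rfl rfl)] at this
      linarith
    -- step 3 : config covering [2,3) with color 1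
    set γ2 : G.Config := fun t => if 2 ≤ t then ⟨1, h1c⟩ else ⟨0, h0c⟩ with hγ2def
    have hγ2in : ∀ t : ℝ, 2 ≤ t → γ2 t = ⟨1, h1c⟩ := by
      intro t h1; simp only [hγ2def]; rw [if_pos h1]
    have hγ2out : ∀ t : ℝ, t < 2 → γ2 t = ⟨0, h0c⟩ := by
      intro t h1; simp only [hγ2def]; rw [if_neg (by linarith)]
    have hcovP22 : G.Covered s γ2 ⟨n+2, hn2⟩ := by
      intro t ht1 ht2
      rw [hsP2] at ht1
      rw [hγ2in t ht1, hcolP2 hn2]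
    have hncL2 : ¬ G.Covered s γ2 ⟨n, hnn⟩ := by
      intro h
      have h0 := h 2 (by rw [hsL]; norm_num) (by rw [hsL, hlenL hnn]; norm_num)
      rw [hγ2in 2 le_rfl, hcolL hnn] at h0
      exact hc01 h0.symm
    have hncP12 : ¬ G.Covered s γ2 ⟨n+1, hn1⟩ := by
      intro h
      have h0 := h 0 (by rw [hsP1]) (by rw [hsP1, hlenP1 hn1]; norm_num)
      rw [hγ2out 0 (by norm_num), hcolP1 hn1] at h0
      exact hc01 h0
    have hcovU2 : ∀ i : Fin n, G.Covered s γ2 ⟨(i:ℕ), hiU i⟩ ↔ s.start ⟨(i:ℕ), hiU i⟩ ≤ 1 := by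
      intro i
      constructor
      · intro h
        by_contra hlt
        push_neg at hlt
        have h0 := h 2 (hst2 i) (by rw [hlenU i (hiU i)]; linarith)
        rw [hγ2in 2 le_rfl, hcolU i (hiU i)] at h0
        exact hc01 h0.symm
      · intro hle t ht1 ht2
        rw [hlenU i (hiU i)] at ht2
        rw [hγ2out t (by linarith), hcolU i (hiU i)]
    have hlt2 : G.profit s γ2 < G.val s := by
      rcases lt_or_eq_of_le (Game.profit_le_val G s γ2) with h | h
      · exact h
      · exact absurd (hcov0 γ2 h).1 hncL2
    have hineq2 : (∑ i : Fin n, if s.start ⟨(i:ℕ), hiU i⟩ ≤ 1 then (a i : ℝ) else 0)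
        + (B:ℝ) < 2 * B + ε := by
      have := hlt2
      rw [profit_eq s γ2, if_neg hncL2, if_neg hncP12, if_pos hcovP22, hval,
        Finset.sum_congr rfl (fun i _ => if_congr (hcovU2 i) rfl rfl)] at this
      linarith
    -- extract the partition
    refine ⟨Finset.univ.filter (fun i => s.start ⟨(i:ℕ), hiU i⟩ < 1), ?_⟩
    set A := Finset.univ.filter (fun i : Fin n => s.start ⟨(i:ℕ), hiU i⟩ < 1) with hAdef
    have hsplitN : (∑ i ∈ A, a i) + (∑ i ∈ Finset.univ.filter
        (fun i : Fin n => ¬ s.start ⟨(i:ℕ), hiU i⟩ < 1), a i) = 2 * B := by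
      rw [hAdef, Finset.sum_filter_add_sum_filter_not, hsum]
    have hAc_le : (∑ i ∈ Finset.univ.filter
        (fun i : Fin n => ¬ s.start ⟨(i:ℕ), hiU i⟩ < 1), a i) ≤ B := by
      have e1 : (∑ i : Fin n, if 1 ≤ s.start ⟨(i:ℕ), hiU i⟩ then (a i : ℝ) else 0)
          = ((∑ i ∈ Finset.univ.filter
            (fun i : Fin n => ¬ s.start ⟨(i:ℕ), hiU i⟩ < 1), a i : ℕ) : ℝ) := by
        push_cast
        rw [Finset.sum_filter]
        simp only [not_lt]
      rw [e1] at hineq1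
      have : ((∑ i ∈ Finset.univ.filter
          (fun i : Fin n => ¬ s.start ⟨(i:ℕ), hiU i⟩ < 1), a i : ℕ) : ℝ) < B + 1 := by linarith
      have h2 : (∑ i ∈ Finset.univ.filter
          (fun i : Fin n => ¬ s.start ⟨(i:ℕ), hiU i⟩ < 1), a i) < B + 1 := by exact_mod_cast this
      omega
    have hA_le : (∑ i ∈ A, a i) ≤ B := by
      have hsub : A ⊆ Finset.univ.filter (fun i : Fin n => s.start ⟨(i:ℕ), hiU i⟩ ≤ 1) := by
        rw [hAdef]
        intro i hi
        rw [Finset.mem_filter] at *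
        exact ⟨hi.1, le_of_lt hi.2⟩
      have e1 : (∑ i : Fin n, if s.start ⟨(i:ℕ), hiU i⟩ ≤ 1 then (a i : ℝ) else 0)
          = ((∑ i ∈ Finset.univ.filter
            (fun i : Fin n => s.start ⟨(i:ℕ), hiU i⟩ ≤ 1), a i : ℕ) : ℝ) := by
        push_cast
        rw [Finset.sum_filter]
      rw [e1] at hineq2
      have h2 : (∑ i ∈ Finset.univ.filter
          (fun i : Fin n => s.start ⟨(i:ℕ), hiU i⟩ ≤ 1), a i) < B + 1 := by exact_mod_cast (by linarith :
            ((∑ i ∈ Finset.univ.filter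
            (fun i : Fin n => s.start ⟨(i:ℕ), hiU i⟩ ≤ 1), a i : ℕ) : ℝ) < (B:ℝ) + 1)
      calc (∑ i ∈ A, a i) ≤ _ := Finset.sum_le_sum_of_subset hsub
        _ ≤ B := by omega
    omega
  · -- backward direction
    rintro ⟨A, hA⟩
    have hAc : (∑ i ∈ Aᶜ, a i) = B := by
      have h := Finset.sum_add_sum_compl A a
      rw [hA, hsum] at h; omega
    have hAsumR : (∑ i ∈ A, (a i : ℝ)) = (B : ℝ) := by
      rw [← Nat.cast_sum, hA]
    have hAcsumR : (∑ i ∈ Aᶜ, (a i : ℝ)) = (B : ℝ) := by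
      rw [← Nat.cast_sum, hAc]
    set st0 : Fin G.n → ℝ := fun j => if h : (j:ℕ) < n
        then (if (⟨(j:ℕ), h⟩ : Fin n) ∈ A then 0 else 2)
        else if (j:ℕ) ≤ n + 1 then 0 else 2 with hst0
    have hfeas1 : ∀ j, 0 ≤ st0 j := by
      intro j; rw [hst0]; dsimp only; split_ifs <;> norm_num
    have hfeas2 : ∀ j, st0 j + G.len j ≤ G.T := by
      intro j; rw [hT, hlen, hst0]; dsimp only
      split_ifs <;> first | (exfalso; omega) | norm_num
    set s : G.Profile := ⟨st0, hfeas1, hfeas2⟩ with hsdef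
    have hsU : ∀ (i : Fin n) (h : (i:ℕ) < G.n),
        s.start ⟨(i:ℕ), h⟩ = if i ∈ A then 0 else 2 := by
      intro i h
      show st0 ⟨(i:ℕ), h⟩ = _
      rw [hst0]; dsimp only
      rw [dif_pos (show ((⟨(i:ℕ), h⟩ : Fin G.n) : ℕ) < n from i.isLt)]
    have hsL : s.start ⟨n, hnn⟩ = 0 := by
      show st0 ⟨n, hnn⟩ = 0
      rw [hst0]; dsimp only
      rw [dif_neg (by omega), if_pos (by omega)]
    have hsP1 : s.start ⟨n+1, hn1⟩ = 0 := by
      show st0 ⟨n+1, hn1⟩ = 0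
      rw [hst0]; dsimp only
      rw [dif_neg (by omega), if_pos (by omega)]
    have hsP2 : s.start ⟨n+2, hn2⟩ = 2 := by
      show st0 ⟨n+2, hn2⟩ = 2
      rw [hst0]; dsimp only
      rw [dif_neg (by omega), if_neg (by omega)]
    have hstU2 : ∀ (i : Fin n), s.start ⟨(i:ℕ), hiU i⟩ ≤ 2 := by
      intro i; rw [hsU i (hiU i)]; split_ifs <;> norm_num
    -- if the big job is covered, everything of color 0 is covered and the profit is 2B+ε
    have covprofit : ∀ γ' : G.Config, G.Covered s γ' ⟨n, hnn⟩ →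
        (G.profit s γ' = 2 * (B:ℝ) + ε ∧
          ∀ j : Fin G.n, (G.color j : ℕ) = 0 → G.Covered s γ' j) := by
      intro γ' hL
      have hγ0 : ∀ t : ℝ, 0 ≤ t → t < 3 → γ' t = ⟨0, h0c⟩ := by
        intro t h1 h2
        have h := hL t (by rw [hsL]; exact h1) (by rw [hsL, hlenL hnn]; linarith)
        rw [h, hcolL hnn]
      have covAll : ∀ j : Fin G.n, (G.color j : ℕ) = 0 → G.Covered s γ' j := by
        intro j hcj t ht1 ht2
        have hc0 : G.color j = ⟨0, h0c⟩ := Fin.ext hcj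
        rw [hc0]
        apply hγ0 t (le_trans (s.start_nonneg j) ht1)
        calc t < s.start j + G.len j := ht2
          _ ≤ G.T := s.start_le j
          _ = 3 := hT
      have hncP1 : ¬ G.Covered s γ' ⟨n+1, hn1⟩ := by
        intro h
        have h0 := h 0 (by rw [hsP1]) (by rw [hsP1, hlenP1 hn1]; norm_num)
        rw [hγ0 0 le_rfl (by norm_num), hcolP1 hn1] at h0
        exact hc01 h0
      have hncP2 : ¬ G.Covered s γ' ⟨n+2, hn2⟩ := by
        intro h
        have h0 := h 2 (by rw [hsP2]) (by rw [hsP2, hlenP2 hn2]; norm_num)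
        rw [hγ0 2 (by norm_num) (by norm_num), hcolP2 hn2] at h0
        exact hc01 h0
      refine ⟨?_, covAll⟩
      rw [profit_eq s γ', if_pos hL, if_neg hncP1, if_neg hncP2,
        Finset.sum_congr rfl (fun (i : Fin n) _ => if_pos (covAll ⟨(i:ℕ), hiU i⟩
          (by rw [hcol]; simp [Nat.le_of_lt i.isLt]))), hsumR]
      ring
    -- if the big job is not covered, profit is at most 2B
    have key : ∀ γ' : G.Config, ¬ G.Covered s γ' ⟨n, hnn⟩ → G.profit s γ' ≤ 2 * (B:ℝ) := by
      intro γ' hL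
      have hsplit : (∑ i : Fin n, if G.Covered s γ' ⟨(i:ℕ), hiU i⟩ then (a i : ℝ) else 0)
          = (∑ i ∈ A, if G.Covered s γ' ⟨(i:ℕ), hiU i⟩ then (a i : ℝ) else 0)
          + (∑ i ∈ Aᶜ, if G.Covered s γ' ⟨(i:ℕ), hiU i⟩ then (a i : ℝ) else 0) :=
        (Finset.sum_add_sum_compl A _).symm
      have hbA : (∑ i ∈ A, if G.Covered s γ' ⟨(i:ℕ), hiU i⟩ then (a i : ℝ) else 0) ≤ (B:ℝ) := by
        rw [← hAsumR]
        apply Finset.sum_le_sum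
        intro i _
        split_ifs <;> simp
      have hbAc : (∑ i ∈ Aᶜ, if G.Covered s γ' ⟨(i:ℕ), hiU i⟩ then (a i : ℝ) else 0) ≤ (B:ℝ) := by
        rw [← hAcsumR]
        apply Finset.sum_le_sum
        intro i _
        split_ifs <;> simp
      have hkillA : G.Covered s γ' ⟨n+1, hn1⟩ →
          (∑ i ∈ A, if G.Covered s γ' ⟨(i:ℕ), hiU i⟩ then (a i : ℝ) else 0) = 0 := by
        intro hP1
        apply Finset.sum_eq_zero
        intro i hi
        rw [if_neg]
        intro hcov
        have h1 := hcov 0 (by rw [hsU i (hiU i), if_pos hi]) (by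
          rw [hsU i (hiU i), if_pos hi, hlenU i (hiU i)]; norm_num)
        have h2 := hP1 0 (by rw [hsP1]) (by rw [hsP1, hlenP1 hn1]; norm_num)
        rw [hcolU i (hiU i)] at h1
        rw [hcolP1 hn1] at h2
        rw [h1] at h2
        exact hc01 h2
      have hkillAc : G.Covered s γ' ⟨n+2, hn2⟩ →
          (∑ i ∈ Aᶜ, if G.Covered s γ' ⟨(i:ℕ), hiU i⟩ then (a i : ℝ) else 0) = 0 := by
        intro hP2
        apply Finset.sum_eq_zero
        intro i hi
        rw [Finset.mem_compl] at hi
        rw [if_neg]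
        intro hcov
        have h1 := hcov 2 (by rw [hsU i (hiU i), if_neg hi]) (by
          rw [hsU i (hiU i), if_neg hi, hlenU i (hiU i)]; norm_num)
        have h2 := hP2 2 (by rw [hsP2]) (by rw [hsP2, hlenP2 hn2]; norm_num)
        rw [hcolU i (hiU i)] at h1
        rw [hcolP2 hn2] at h2
        rw [h1] at h2
        exact hc01 h2
      have hB0 : (0:ℝ) ≤ B := Nat.cast_nonneg B
      rw [profit_eq s γ', if_neg hL, hsplit]
      by_cases hP1 : G.Covered s γ' ⟨n+1, hn1⟩ <;>
        by_cases hP2 : G.Covered s γ' ⟨n+2, hn2⟩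
      · rw [if_pos hP1, if_pos hP2, hkillA hP1, hkillAc hP2]; linarith
      · rw [if_pos hP1, if_neg hP2, hkillA hP1]; linarith
      · rw [if_neg hP1, if_pos hP2, hkillAc hP2]; linarith
      · rw [if_neg hP1, if_neg hP2]; linarith
    -- the value of the profile
    have hval : G.val s = 2 * (B:ℝ) + ε := by
      apply le_antisymm
      · apply Game.val_le G s _ (fun _ => ⟨0, h0c⟩)
        intro γ'
        by_cases hL : G.Covered s γ' ⟨n, hnn⟩
        · exact le_of_eq (covprofit γ' hL).1
        · have := key γ' hL
          linarith
      · have hcov : G.Covered s (fun _ => (⟨0, h0c⟩ : Fin G.c)) ⟨n, hnn⟩ := by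
          intro t _ _
          rw [hcolL hnn]
        rw [← (covprofit _ hcov).1]
        exact Game.profit_le_val G s _
    refine ⟨s, ?_, ?_, ?_⟩
    · intro j hj
      show st0 j = 0
      rw [hst0]; dsimp only
      rw [dif_neg (by omega), if_pos (by omega)]
    · intro j hj
      show st0 j = 2
      rw [hst0]; dsimp only
      rw [dif_neg (by omega), if_neg (by omega)]
    · intro γ hγ
      rw [hval] at hγ
      by_cases hL : G.Covered s γ ⟨n, hnn⟩
      · exact (covprofit γ hL).2
      · have := key γ hL
        have hB0 : (0:ℝ) ≤ B := Nat.cast_nonneg B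
        linarith
end

section
/- Let 0 < δ < 1 and consider the interval scheduling game with T = 2 and c = 2 in which S_1 consists of one job of length 2 and weight δ and one job of length 1 and weight 1, and S_2 consists of a single job of length 1 and weight 1. Then val(OPT) = 2, and for every tie-breaking rule M: the game has a Nash equilibrium with respect to M, and every Nash equilibrium σ with respect to M satisfies val(σ) = 1 + δ. Consequently, the price of stability of this game equals 2/(1+δ). -/
open Classical

/-- The 2-color game with `T = 2`, player 1 owning a job of length 2 and weight `δ`
and a unit job of weight 1, and player 2 owning a unit job of weight 1, has
`val(OPT) = 2`; for every tie-breaking rule a Nash equilibrium exists and every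
Nash equilibrium has value `1 + δ`. Hence the price of stability is `2/(1+δ)`. -/
theorem PoS_two_minus_eps_game (δ : ℝ) (hδ1 : 0 < δ) (hδ2 : δ < 1)
    (G : Game) (hn : G.n = 3) (hc : G.c = 2) (hT : G.T = 2)
    (hcol : ∀ j : Fin G.n, (G.color j : ℕ) = if (j : ℕ) ≤ 1 then 0 else 1)
    (hlen : ∀ j : Fin G.n, G.len j = if (j : ℕ) = 0 then 2 else 1)
    (hwt : ∀ j : Fin G.n, G.wt j = if (j : ℕ) = 0 then δ else 1) :
    G.valOPT = 2 ∧
    (∀ M : G.TieBreak,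
      (∃ s : G.Profile, G.IsNE M s) ∧
      (∀ s : G.Profile, G.IsNE M s → G.val s = 1 + δ)) ∧
    (∀ (M : G.TieBreak) (s : G.Profile), G.IsNE M s →
      G.valOPT / G.val s = 2 / (1 + δ)) := by
  have hn0 : 0 < G.n := by omega
  have hn1 : 1 < G.n := by omega
  have hn2 : 2 < G.n := by omega
  have hc0 : 0 < G.c := by omega
  have hc1 : 1 < G.c := by omega
  obtain ⟨j0, hv0⟩ : ∃ j : Fin G.n, (j : ℕ) = 0 := ⟨⟨0, hn0⟩, rfl⟩
  obtain ⟨j1, hv1⟩ : ∃ j : Fin G.n, (j : ℕ) = 1 := ⟨⟨1, hn1⟩, rfl⟩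
  obtain ⟨j2, hv2⟩ : ∃ j : Fin G.n, (j : ℕ) = 2 := ⟨⟨2, hn2⟩, rfl⟩
  obtain ⟨i0, hw0⟩ : ∃ i : Fin G.c, (i : ℕ) = 0 := ⟨⟨0, hc0⟩, rfl⟩
  obtain ⟨i1, hw1⟩ : ∃ i : Fin G.c, (i : ℕ) = 1 := ⟨⟨1, hc1⟩, rfl⟩
  have hne01 : i0 ≠ i1 := by intro h; rw [h] at hw0; omega
  have hcol0 : G.color j0 = i0 := Fin.ext (by rw [hcol, hv0, hw0]; norm_num)
  have hcol1 : G.color j1 = i0 := Fin.ext (by rw [hcol, hv1, hw0]; norm_num)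
  have hcol2 : G.color j2 = i1 := Fin.ext (by rw [hcol, hv2, hw1]; norm_num)
  have hlen0 : G.len j0 = 2 := by rw [hlen, hv0]; norm_num
  have hlen1 : G.len j1 = 1 := by rw [hlen, hv1]; norm_num
  have hlen2 : G.len j2 = 1 := by rw [hlen, hv2]; norm_num
  have hwt0 : G.wt j0 = δ := by rw [hwt, hv0]; norm_num
  have hwt1 : G.wt j1 = 1 := by rw [hwt, hv1]; norm_num
  have hwt2 : G.wt j2 = 1 := by rw [hwt, hv2]; norm_num
  have hdist01 : j0 ≠ j1 := by intro h; rw [h, hv1] at hv0; omega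
  have hdist02 : j0 ≠ j2 := by intro h; rw [h, hv2] at hv0; omega
  have hdist12 : j1 ≠ j2 := by intro h; rw [h, hv2] at hv1; omega
  have huniv : (Finset.univ : Finset (Fin G.n)) = {j0, j1, j2} := by
    ext j
    simp only [Finset.mem_univ, Finset.mem_insert, Finset.mem_singleton, true_iff]
    have hj := j.isLt
    have h : (j : ℕ) = 0 ∨ (j : ℕ) = 1 ∨ (j : ℕ) = 2 := by omega
    rcases h with h | h | h
    · exact Or.inl (Fin.ext (by omega))
    · exact Or.inr (Or.inl (Fin.ext (by omega)))
    · exact Or.inr (Or.inr (Fin.ext (by omega)))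
  have hsum : ∀ f : Fin G.n → ℝ, ∑ j, f j = f j0 + f j1 + f j2 := by
    intro f
    rw [huniv, Finset.sum_insert (by simp [hdist01, hdist02]),
        Finset.sum_insert (by simp [hdist12]), Finset.sum_singleton]
    ring
  -- basic bounds on start times
  have hstart0 : ∀ s : G.Profile, s.start j0 = 0 := by
    intro s
    have h1 := s.start_nonneg j0
    have h2 := s.start_le j0
    rw [hlen0, hT] at h2
    linarith
  have hs2lt : ∀ s : G.Profile, 0 ≤ s.start j2 ∧ s.start j2 + 1 ≤ 2 := by
    intro s
    refine ⟨s.start_nonneg j2, ?_⟩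
    have h := s.start_le j2; rw [hlen2, hT] at h; exact h
  -- profit expansion
  have hprofit : ∀ (s : G.Profile) (γ : G.Config),
      G.profit s γ = (if G.Covered s γ j0 then δ else 0)
        + (if G.Covered s γ j1 then (1:ℝ) else 0)
        + (if G.Covered s γ j2 then (1:ℝ) else 0) := by
    intro s γ
    unfold Game.profit
    rw [hsum, hwt0, hwt1, hwt2]
  -- utility expansion
  have hutil : ∀ (M : G.TieBreak) (i : Fin G.c) (s : G.Profile),
      G.utility M i s = (if G.color j0 = i ∧ G.Covered s (M.choice s) j0 then δ else 0)
        + (if G.color j1 = i ∧ G.Covered s (M.choice s) j1 then (1:ℝ) else 0)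
        + (if G.color j2 = i ∧ G.Covered s (M.choice s) j2 then (1:ℝ) else 0) := by
    intro M i s
    unfold Game.utility
    rw [hsum, hwt0, hwt1, hwt2]
  -- jobs 0 and 2 can never both be covered
  have hexcl02 : ∀ (s : G.Profile) (γ : G.Config), G.Covered s γ j0 → ¬ G.Covered s γ j2 := by
    intro s γ h0 h2'
    obtain ⟨hb1, hb2⟩ := hs2lt s
    have e0 := h0 (s.start j2) (by rw [hstart0]; exact hb1) (by rw [hstart0, hlen0]; linarith)
    have e2 := h2' (s.start j2) le_rfl (by rw [hlen2]; linarith)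
    rw [hcol0] at e0; rw [hcol2] at e2
    exact hne01 (e0.symm.trans e2)
  -- the all-0 configuration has profit δ + 1 at every profile
  have hA : ∀ s : G.Profile, G.profit s (fun _ => i0) = δ + 1 := by
    intro s
    rw [hprofit]
    have c0 : G.Covered s (fun _ => i0) j0 := fun t _ _ => hcol0.symm
    have c1 : G.Covered s (fun _ => i0) j1 := fun t _ _ => hcol1.symm
    have c2 : ¬ G.Covered s (fun _ => i0) j2 := by
      intro h
      have e := h (s.start j2) le_rfl (by rw [hlen2]; linarith)
      rw [hcol2] at e
      exact hne01 e
    rw [if_pos c0, if_pos c1, if_neg c2]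
    ring
  have hNe : ∀ s : G.Profile,
      Set.Nonempty {x : ℝ | ∃ γ : G.Config, x = G.profit s γ} :=
    fun s => ⟨G.profit s (fun _ => i0), ⟨fun _ => i0, rfl⟩⟩
  have hBdd : ∀ s : G.Profile,
      BddAbove {x : ℝ | ∃ γ : G.Config, x = G.profit s γ} := by
    intro s
    refine ⟨δ + 2, ?_⟩
    rintro x ⟨γ, rfl⟩
    rw [hprofit]
    split_ifs <;> linarith
  have hval_def : ∀ s : G.Profile,
      G.val s = sSup {x : ℝ | ∃ γ : G.Config, x = G.profit s γ} := fun _ => rfl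
  have hval_eq : ∀ (s : G.Profile) (B : ℝ), (∀ γ : G.Config, G.profit s γ ≤ B) →
      (∃ γ : G.Config, G.profit s γ = B) → G.val s = B := by
    intro s B hub hex
    obtain ⟨γ, hγ⟩ := hex
    rw [hval_def]
    apply le_antisymm
    · exact csSup_le (hNe s) (by rintro x ⟨γ', rfl⟩; exact hub γ')
    · exact hγ ▸ le_csSup (hBdd s) ⟨γ, rfl⟩
  -- profit is at most 2
  have hple2 : ∀ (s : G.Profile) (γ : G.Config), G.profit s γ ≤ 2 := by
    intro s γ
    rw [hprofit]
    by_cases h0 : G.Covered s γ j0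
    · rw [if_pos h0, if_neg (hexcl02 s γ h0)]
      split_ifs <;> linarith
    · rw [if_neg h0]
      split_ifs <;> linarith
  -- value is δ + 1 whenever jobs 1 and 2 overlap
  have hval_1δ : ∀ s : G.Profile,
      (∃ t, s.start j1 ≤ t ∧ t < s.start j1 + G.len j1 ∧
        s.start j2 ≤ t ∧ t < s.start j2 + G.len j2) → G.val s = δ + 1 := by
    intro s hov
    obtain ⟨t, ht1, ht2, ht3, ht4⟩ := hov
    apply hval_eq
    · intro γ
      rw [hprofit]
      by_cases h2 : G.Covered s γ j2
      · have h0 : ¬ G.Covered s γ j0 := fun h => hexcl02 s γ h h2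
        have h1 : ¬ G.Covered s γ j1 := by
          intro h1
          have e1 := h1 t ht1 ht2
          have e2 := h2 t ht3 ht4
          rw [hcol1] at e1; rw [hcol2] at e2
          exact hne01 (e1.symm.trans e2)
        rw [if_neg h0, if_neg h1, if_pos h2]
        linarith
      · rw [if_neg h2]
        split_ifs <;> linarith
    · exact ⟨fun _ => i0, hA s⟩
  -- when jobs 1 and 2 overlap, the tie-break must cover jobs 0 and 1 and not job 2
  have hforced : ∀ (M : G.TieBreak) (s : G.Profile),
      (∃ t, s.start j1 ≤ t ∧ t < s.start j1 + G.len j1 ∧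
        s.start j2 ≤ t ∧ t < s.start j2 + G.len j2) →
      G.Covered s (M.choice s) j0 ∧ G.Covered s (M.choice s) j1 ∧
        ¬ G.Covered s (M.choice s) j2 := by
    intro M s hov
    have hv := M.choice_opt s
    rw [hval_1δ s hov] at hv
    rw [hprofit] at hv
    obtain ⟨t, ht1, ht2, ht3, ht4⟩ := hov
    by_cases h2 : G.Covered s (M.choice s) j2
    · exfalso
      have h0 : ¬ G.Covered s (M.choice s) j0 := fun h => hexcl02 s _ h h2
      have h1 : ¬ G.Covered s (M.choice s) j1 := by
        intro h1
        have e1 := h1 t ht1 ht2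
        have e2 := h2 t ht3 ht4
        rw [hcol1] at e1; rw [hcol2] at e2
        exact hne01 (e1.symm.trans e2)
      rw [if_neg h0, if_neg h1, if_pos h2] at hv
      linarith
    · by_cases h0 : G.Covered s (M.choice s) j0
      · by_cases h1 : G.Covered s (M.choice s) j1
        · exact ⟨h0, h1, h2⟩
        · exfalso
          rw [if_pos h0, if_neg h1, if_neg h2] at hv
          linarith
      · exfalso
        rw [if_neg h0, if_neg h2] at hv
        split_ifs at hv <;> linarith
  -- utility facts
  have hutil0_le : ∀ (M : G.TieBreak) (s : G.Profile), G.utility M i0 s ≤ δ + 1 := by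
    intro M s
    rw [hutil]
    have n2 : ¬ (G.color j2 = i0 ∧ G.Covered s (M.choice s) j2) := by
      rintro ⟨hcc, -⟩
      rw [hcol2] at hcc
      exact hne01 hcc.symm
    rw [if_neg n2]
    split_ifs <;> linarith
  have hutil_nonneg : ∀ (M : G.TieBreak) (i : Fin G.c) (s : G.Profile),
      0 ≤ G.utility M i s := by
    intro M i s
    rw [hutil]
    split_ifs <;> linarith
  have hutil0 : ∀ (M : G.TieBreak) (s : G.Profile),
      G.Covered s (M.choice s) j0 → G.Covered s (M.choice s) j1 →
      G.utility M i0 s = δ + 1 := by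
    intro M s h0 h1
    rw [hutil]
    have n2 : ¬ (G.color j2 = i0 ∧ G.Covered s (M.choice s) j2) := by
      rintro ⟨hcc, -⟩
      rw [hcol2] at hcc
      exact hne01 hcc.symm
    rw [if_pos ⟨hcol0, h0⟩, if_pos ⟨hcol1, h1⟩, if_neg n2]
    ring
  have hutil1_zero : ∀ (M : G.TieBreak) (s : G.Profile),
      ¬ G.Covered s (M.choice s) j2 → G.utility M i1 s = 0 := by
    intro M s h2
    rw [hutil]
    have n0 : ¬ (G.color j0 = i1 ∧ G.Covered s (M.choice s) j0) := by
      rintro ⟨hcc, -⟩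
      rw [hcol0] at hcc
      exact hne01 hcc
    have n1 : ¬ (G.color j1 = i1 ∧ G.Covered s (M.choice s) j1) := by
      rintro ⟨hcc, -⟩
      rw [hcol1] at hcc
      exact hne01 hcc
    rw [if_neg n0, if_neg n1, if_neg (fun h => h2 h.2)]
    ring
  -- the optimal profile
  obtain ⟨sOPT, hsOPT⟩ : ∃ s : G.Profile,
      s.start = fun j : Fin G.n => if (j : ℕ) = 2 then (1:ℝ) else 0 := by
    refine ⟨⟨fun j : Fin G.n => if (j : ℕ) = 2 then (1:ℝ) else 0, ?_, ?_⟩, rfl⟩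
    · intro j
      split_ifs <;> norm_num
    · intro j
      rw [hlen, hT]
      split_ifs with h h' <;> first | (exfalso; omega) | norm_num
  have hvalsOPT : G.val sOPT = 2 := by
    apply hval_eq sOPT 2 (hple2 sOPT)
    refine ⟨fun t => if t < 1 then i0 else i1, ?_⟩
    have e0 : sOPT.start j0 = 0 := by rw [hsOPT]; simp only; rw [hv0]; norm_num
    have e1 : sOPT.start j1 = 0 := by rw [hsOPT]; simp only; rw [hv1]; norm_num
    have e2 : sOPT.start j2 = 1 := by rw [hsOPT]; simp only; rw [hv2]; norm_num
    rw [hprofit]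
    have c1 : G.Covered sOPT (fun t => if t < 1 then i0 else i1) j1 := by
      intro t ht1 ht2
      rw [e1] at ht1
      rw [e1, hlen1] at ht2
      simp only
      rw [if_pos (by linarith)]
      exact hcol1.symm
    have c2 : G.Covered sOPT (fun t => if t < 1 then i0 else i1) j2 := by
      intro t ht1 ht2
      rw [e2] at ht1
      simp only
      rw [if_neg (by linarith)]
      exact hcol2.symm
    have c0 : ¬ G.Covered sOPT (fun t => if t < 1 then i0 else i1) j0 := by
      intro h
      have e := h 1 (by rw [e0]; norm_num) (by rw [e0, hlen0]; norm_num)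
      simp only at e
      rw [if_neg (by norm_num), hcol0] at e
      exact hne01 e.symm
    rw [if_neg c0, if_pos c1, if_pos c2]
    ring
  have hvalle2 : ∀ s : G.Profile, G.val s ≤ 2 := by
    intro s
    rw [hval_def]
    exact csSup_le (hNe s) (by rintro x ⟨γ, rfl⟩; exact hple2 s γ)
  have hvalOPT : G.valOPT = 2 := by
    have hmem : G.val sOPT ∈ {x : ℝ | ∃ s : G.Profile, x = G.val s} := ⟨sOPT, rfl⟩
    have hbdd : BddAbove {x : ℝ | ∃ s : G.Profile, x = G.val s} :=
      ⟨2, by rintro x ⟨s, rfl⟩; exact hvalle2 s⟩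
    have hle := le_csSup hbdd hmem
    rw [hvalsOPT] at hle
    exact le_antisymm
      (csSup_le ⟨G.val sOPT, sOPT, rfl⟩ (by rintro x ⟨s, rfl⟩; exact hvalle2 s)) hle
  -- overlap when job 1 sits at 1/2
  have hov_half : ∀ s : G.Profile, s.start j1 = 1/2 →
      ∃ t, s.start j1 ≤ t ∧ t < s.start j1 + G.len j1 ∧
        s.start j2 ≤ t ∧ t < s.start j2 + G.len j2 := by
    intro s h1
    obtain ⟨hb1, hb2⟩ := hs2lt s
    refine ⟨max (s.start j2) (1/2), ?_, ?_, le_max_left _ _, ?_⟩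
    · rw [h1]; exact le_max_right _ _
    · rw [h1, hlen1]; apply max_lt <;> linarith
    · rw [hlen2]; apply max_lt <;> linarith
  -- the NE profile
  obtain ⟨sNE, hsNE⟩ : ∃ s : G.Profile,
      s.start = fun j : Fin G.n => if (j : ℕ) = 1 then (1/2:ℝ) else 0 := by
    refine ⟨⟨fun j : Fin G.n => if (j : ℕ) = 1 then (1/2:ℝ) else 0, ?_, ?_⟩, rfl⟩
    · intro j
      split_ifs <;> norm_num
    · intro j
      rw [hlen, hT]
      split_ifs with h h' <;> first | (exfalso; omega) | norm_num
  have hsNE1 : sNE.start j1 = 1/2 := by rw [hsNE]; simp only; rw [hv1]; norm_num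
  have hNEsNE : ∀ M : G.TieBreak, G.IsNE M sNE := by
    intro M
    unfold Game.IsNE
    intro i s' hfix
    have hi := i.isLt
    have : i = i0 ∨ i = i1 := by
      have h : (i : ℕ) = 0 ∨ (i : ℕ) = 1 := by omega
      rcases h with h | h
      · exact Or.inl (Fin.ext (by omega))
      · exact Or.inr (Fin.ext (by omega))
    rcases this with h | h
    · rw [h]
      have hf := hforced M sNE (hov_half sNE hsNE1)
      calc G.utility M i0 s' ≤ δ + 1 := hutil0_le M s'
        _ = G.utility M i0 sNE := (hutil0 M sNE hf.1 hf.2.1).symm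
    · rw [h]
      have h1' : s'.start j1 = 1/2 := by
        rw [hfix j1 (by rw [hcol1, h]; exact hne01), hsNE1]
      have hf := hforced M s' (hov_half s' h1')
      rw [hutil1_zero M s' hf.2.2]
      exact hutil_nonneg M i1 sNE
  -- every NE has value 1 + δ
  have hNEval : ∀ (M : G.TieBreak) (s : G.Profile), G.IsNE M s → G.val s = 1 + δ := by
    intro M s hs
    obtain ⟨s', hs'⟩ : ∃ s' : G.Profile,
        s'.start = fun j : Fin G.n => if (j : ℕ) = 0 then (0:ℝ) else s.start j2 := by
      obtain ⟨hb1, hb2⟩ := hs2lt s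
      refine ⟨⟨fun j : Fin G.n => if (j : ℕ) = 0 then (0:ℝ) else s.start j2, ?_, ?_⟩, rfl⟩
      · intro j
        split_ifs
        · exact le_refl 0
        · exact hb1
      · intro j
        rw [hlen, hT]
        split_ifs <;> linarith
    have hfix : ∀ j, G.color j ≠ i0 → s'.start j = s.start j := by
      intro j hj
      have hjv : (j : ℕ) = 2 := by
        by_contra hne
        apply hj
        apply Fin.ext
        have hjlt := j.isLt
        rw [hcol j, hw0, if_pos (by omega)]
      have hj2 : j = j2 := Fin.ext (by omega)
      rw [hs']
      simp only
      rw [hjv, if_neg (by norm_num), hj2]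
    have e1 : s'.start j1 = s.start j2 := by
      rw [hs']; simp only; rw [hv1]; norm_num
    have e2 : s'.start j2 = s.start j2 := by
      rw [hs']; simp only; rw [hv2]; norm_num
    have hov' : ∃ t, s'.start j1 ≤ t ∧ t < s'.start j1 + G.len j1 ∧
        s'.start j2 ≤ t ∧ t < s'.start j2 + G.len j2 := by
      refine ⟨s.start j2, by rw [e1], ?_, by rw [e2], ?_⟩
      · rw [e1, hlen1]; linarith
      · rw [e2, hlen2]; linarith
    have hf' := hforced M s' hov'
    have hu' : G.utility M i0 s' = δ + 1 := hutil0 M s' hf'.1 hf'.2.1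
    have hle := hs i0 s' hfix
    rw [hu'] at hle
    have h0 : G.Covered s (M.choice s) j0 := by
      by_contra h0
      have n2 : ¬ (G.color j2 = i0 ∧ G.Covered s (M.choice s) j2) := by
        rintro ⟨hcc, -⟩
        rw [hcol2] at hcc
        exact hne01 hcc.symm
      have hb : G.utility M i0 s ≤ 1 := by
        rw [hutil]
        rw [if_neg (fun h => h0 h.2), if_neg n2]
        split_ifs <;> linarith
      linarith
    have h1 : G.Covered s (M.choice s) j1 := by
      by_contra h1
      have n2 : ¬ (G.color j2 = i0 ∧ G.Covered s (M.choice s) j2) := by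
        rintro ⟨hcc, -⟩
        rw [hcol2] at hcc
        exact hne01 hcc.symm
      have hb : G.utility M i0 s ≤ δ := by
        rw [hutil]
        rw [if_pos ⟨hcol0, h0⟩, if_neg (fun h : G.color j1 = i0 ∧ G.Covered s (M.choice s) j1 => h1 h.2), if_neg n2]
        linarith
      linarith
    have h2 := hexcl02 s (M.choice s) h0
    have hopt := M.choice_opt s
    rw [hprofit, if_pos h0, if_pos h1, if_neg h2] at hopt
    linarith
  refine ⟨hvalOPT, fun M => ⟨⟨sNE, hNEsNE M⟩, fun s hs => hNEval M s hs⟩, fun M s hs => ?_⟩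
  rw [hvalOPT, hNEval M s hs]
end

section
/- Let G be a game in G_unit with T ≥ 1 and let k = ⌊T⌋. For every tie-breaking rule M and every Nash equilibrium σ with respect to M, val(OPT) ≤ (3 − 2/k)·val(σ) and val(OPT) ≤ (3 − 2/c)·val(σ); that is, the price of anarchy of G is at most min{3 − 2/k, 3 − 2/c}. -/
open Classical

/-!
Fix an equilibrium `s` of value `v`, a player `i` and a unit window `[a, a + 1)`, and let `i`
deviate by moving all its jobs into the window. Either the tie-breaking rule then serves `i` on
the whole window, and `i` collects the total weight `W i` of its color; or it does not, and then
the deviation has value at most `v`, whereas serving `i` on the window and keeping the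
equilibrium configuration elsewhere earns `W i` plus every equilibrium job away from the window.
Either way `W i ≤ u i + Y i a`, with `u i` the utility of `i` and `Y i a` the weight of the other
equilibrium jobs meeting the window. Summing over `r` windows spread evenly over the horizon,
which a unit job meets at most twice, gives `r W i ≤ r u i + 2 (v - u i)`. An optimal schedule
covers at most `r = min ⌊T⌋ c` colors, and summing over these colors with `∑ u i ≤ v` yields
`OPT ≤ (3 - 2 / r) v`.
-/

open Finset

lemma card_filter_abs_sub_mul_lt_one_le_two {d : ℝ} (hd : 1 ≤ d) (x : ℝ) (r : ℕ) :
    #{m ∈ range r | |x - ((m : ℕ) : ℝ) * d| < 1} ≤ 2 := by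
  set F := {m ∈ range r | |x - ((m : ℕ) : ℝ) * d| < 1}
  rcases F.eq_empty_or_nonempty with hF | hF
  · simp [hF]
  have hsub : F ⊆ Icc (F.min' hF) (F.min' hF + 1) := by
    intro m hm
    refine mem_Icc.2 ⟨F.min'_le m hm, Nat.le_of_lt_succ ?_⟩
    have h₀ := abs_lt.1 (mem_filter.1 (F.min'_mem hF)).2
    have h₁ := abs_lt.1 (mem_filter.1 hm).2
    have : ((m : ℝ) - F.min' hF) * d < 2 * d := by nlinarith
    exact_mod_cast (by nlinarith : (m : ℝ) < F.min' hF + 2)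
  exact (card_le_card hsub).trans (by rw [Nat.card_Icc]; omega)

-- The coefficient `min r 2` rather than `2` is what makes the bound hold for `r = 1` as well.
lemma sum_le_three_sub_two_div_mul {ι : Type*} {C : Finset ι} {W u U : ι → ℝ} {v : ℝ}
    {r : ℕ} (hr : 1 ≤ r) (hC : #C ≤ r) (hu : ∀ i ∈ C, 0 ≤ u i)
    (hsum : ∑ i ∈ C, u i ≤ v) (hsplit : ∀ i ∈ C, u i + U i = v)
    (hW : ∀ i ∈ C, r * W i ≤ r * u i + (min r 2 : ℕ) * U i) :
    ∑ i ∈ C, W i ≤ (3 - 2 / r) * v := by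
  set e : ℝ := ((min r 2 : ℕ) : ℝ)
  have hr' : (1 : ℝ) ≤ r := by exact_mod_cast hr
  have he : e ≤ r ∧ e ≤ 2 := by simp [e]
  have hv : 0 ≤ v := (sum_nonneg hu).trans hsum
  have hU : ∑ i ∈ C, U i = #C * v - ∑ i ∈ C, u i := by
    rw [eq_sub_iff_add_eq, ← sum_add_distrib,
      sum_congr rfl fun i hi => by rw [add_comm, hsplit i hi], sum_const, nsmul_eq_mul]
  have hsumW : r * ∑ i ∈ C, W i ≤ r * ∑ i ∈ C, u i + e * ∑ i ∈ C, U i := by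
    simp only [mul_sum, ← sum_add_distrib]
    exact sum_le_sum hW
  have hC' : e * #C * v ≤ e * r * v := by gcongr
  have hu' : (r - e) * ∑ i ∈ C, u i ≤ (r - e) * v := by gcongr; linarith
  have he' : 0 ≤ (2 - e) * (r - 1) * v := by
    apply mul_nonneg (mul_nonneg _ _) hv <;> linarith
  rw [hU] at hsumW
  rw [show (3 - 2 / (r : ℝ)) * v = (3 * r - 2) * v / r by field_simp, le_div_iff₀ (by linarith)]
  linear_combination hsumW + hu' + hC' + he'

namespace Game

variable {G : Game}

noncomputable def weight (G : Game) (P : Fin G.n → Prop) : ℝ :=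
  ∑ j with P j, G.wt j

lemma weight_nonneg (P : Fin G.n → Prop) : 0 ≤ G.weight P :=
  sum_nonneg fun j _ => G.wt_nonneg j

lemma weight_mono {P Q : Fin G.n → Prop} (h : ∀ j, P j → Q j) : G.weight P ≤ G.weight Q :=
  sum_le_sum_of_subset_of_nonneg (monotone_filter_right _ fun j _ => h j)
    fun j _ _ => G.wt_nonneg j

lemma weight_and_add_weight_and_not (P Q : Fin G.n → Prop) :
    G.weight (fun j => P j ∧ Q j) + G.weight (fun j => P j ∧ ¬Q j) = G.weight P := by
  simp only [weight, ← filter_filter]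
  exact sum_filter_add_sum_filter_not _ _ _

lemma profit_eq_weight (s : G.Profile) (γ : G.Config) :
    G.profit s γ = G.weight (G.Covered s γ) :=
  (sum_filter _ _).symm

lemma utility_eq_weight (M : G.TieBreak) (i : Fin G.c) (s : G.Profile) :
    G.utility M i s = G.weight fun j => G.Covered s (M.choice s) j ∧ G.color j = i := by
  simp only [utility, weight, sum_filter, and_comm]

lemma profit_le_val_s18 (s : G.Profile) (γ : G.Config) : G.profit s γ ≤ G.val s := by
  refine le_csSup ⟨G.weight fun _ => True, ?_⟩ ⟨γ, rfl⟩
  rintro _ ⟨γ', rfl⟩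
  rw [profit_eq_weight]
  exact weight_mono fun _ _ => trivial

lemma val_nonneg (s : G.Profile) : 0 ≤ G.val s := by
  refine Real.sSup_nonneg ?_
  rintro _ ⟨γ, rfl⟩
  rw [profit_eq_weight]
  exact weight_nonneg _

lemma valOPT_le_of_forall_profit_le {B : ℝ} (hB : 0 ≤ B) (h : ∀ p γ, G.profit p γ ≤ B) :
    G.valOPT ≤ B := by
  refine Real.sSup_le ?_ hB
  rintro _ ⟨p, rfl⟩
  refine Real.sSup_le ?_ hB
  rintro _ ⟨γ, rfl⟩
  exact h p γ

section UnitJobs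

variable {M : G.TieBreak} {s : G.Profile} {i : Fin G.c} {a : ℝ}

lemma color_eq_of_covered_of_abs_sub_lt (hunit : ∀ j, G.len j = 1) {p : G.Profile}
    {γ : G.Config} {j j' : Fin G.n} (hj : G.Covered p γ j) (hj' : G.Covered p γ j')
    (hjj' : |p.start j - p.start j'| < 1) : G.color j = G.color j' := by
  rw [abs_lt] at hjj'
  have hmax := max_lt (lt_add_one (p.start j)) (by linarith : p.start j' < p.start j + 1)
  have hmax' := max_lt (by linarith : p.start j < p.start j' + 1) (lt_add_one (p.start j'))
  rw [← hj (max _ _) (le_max_left _ _) (by rwa [hunit]),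
    ← hj' (max _ _) (le_max_right _ _) (by rwa [hunit])]

def Profile.moveColor (hunit : ∀ j, G.len j = 1) (s : G.Profile) (i : Fin G.c)
    (ha : 0 ≤ a) (haT : a + 1 ≤ G.T) : G.Profile where
  start j := if G.color j = i then a else s.start j
  start_nonneg j := by
    split_ifs
    exacts [ha, s.start_nonneg j]
  start_le j := by
    split_ifs
    · rwa [hunit]
    · exact s.start_le j

lemma covered_moveColor (hunit : ∀ j, G.len j = 1) (ha : 0 ≤ a) (haT : a + 1 ≤ G.T)
    {γ : G.Config} (hγ : ∀ t ∈ Set.Ico a (a + 1), γ t = i) {j : Fin G.n}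
    (hj : G.color j = i) : G.Covered (s.moveColor hunit i ha haT) γ j := by
  intro t ht ht'
  simp only [Profile.moveColor, if_pos hj, hunit] at ht ht'
  rw [hγ t ⟨ht, ht'⟩, hj]

lemma covered_moveColor_iff (hunit : ∀ j, G.len j = 1) (ha : 0 ≤ a) (haT : a + 1 ≤ G.T)
    {γ : G.Config} {j : Fin G.n} (hj : G.color j ≠ i) :
    G.Covered (s.moveColor hunit i ha haT) γ j ↔ G.Covered s γ j := by
  simp only [Covered, Profile.moveColor, if_neg hj]

lemma profit_moveColor_le (hunit : ∀ j, G.len j = 1) (ha : 0 ≤ a) (haT : a + 1 ≤ G.T)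
    {γ : G.Config} {t₀ : ℝ} (ht₀ : t₀ ∈ Set.Ico a (a + 1)) (hγ : γ t₀ ≠ i) :
    G.profit (s.moveColor hunit i ha haT) γ ≤ G.profit s γ := by
  simp only [profit_eq_weight]
  refine weight_mono fun j hj => ?_
  by_cases hji : G.color j = i
  · refine absurd ?_ hγ
    have := hj t₀
    simp only [Profile.moveColor, if_pos hji, hunit] at this
    rw [this ht₀.1 ht₀.2, hji]
  · exact (covered_moveColor_iff hunit ha haT hji).1 hj

lemma weight_color_add_weight_far_le_profit_moveColor (hunit : ∀ j, G.len j = 1) (ha : 0 ≤ a)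
    (haT : a + 1 ≤ G.T) (γ : G.Config) :
    G.weight (G.color · = i) +
        G.weight (fun j => (G.Covered s γ j ∧ G.color j ≠ i) ∧ ¬|s.start j - a| < 1) ≤
      G.profit (s.moveColor hunit i ha haT) ((Set.Ico a (a + 1)).piecewise (fun _ => i) γ) := by
  rw [profit_eq_weight, ← weight_and_add_weight_and_not (G.Covered _ _) (G.color · = i)]
  refine add_le_add (weight_mono fun j hj => ⟨?_, hj⟩)
    (weight_mono fun j hj => ⟨?_, hj.1.2⟩)
  · exact covered_moveColor hunit ha haT (fun t ht => Set.piecewise_eq_of_mem _ _ _ ht) hj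
  · rw [covered_moveColor_iff hunit ha haT hj.1.2]
    intro t ht ht'
    have hfar : t ∉ Set.Ico a (a + 1) := by
      rintro ⟨h₁, h₂⟩
      rw [hunit] at ht'
      exact hj.2 (abs_sub_lt_iff.2 ⟨by linarith, by linarith⟩)
    rw [Set.piecewise_eq_of_notMem _ _ _ hfar]
    exact hj.1.1 t ht ht'

theorem weight_color_le_utility_add_weight_near (hunit : ∀ j, G.len j = 1) (hNE : G.IsNE M s)
    (ha : 0 ≤ a) (haT : a + 1 ≤ G.T) :
    G.weight (G.color · = i) ≤ G.utility M i s + G.weight fun j =>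
      (G.Covered s (M.choice s) j ∧ G.color j ≠ i) ∧ |s.start j - a| < 1 := by
  set s' := s.moveColor hunit i ha haT
  have hs' : ∀ j, G.color j ≠ i → s'.start j = s.start j := fun j hj => if_neg hj
  by_cases hserve : ∀ t ∈ Set.Ico a (a + 1), M.choice s' t = i
  · have hdev : G.utility M i s' = G.weight (G.color · = i) := by
      rw [utility_eq_weight]
      congr 1
      ext j
      exact and_iff_right_of_imp (covered_moveColor hunit ha haT hserve)
    have := hNE i s' hs'
    linarith [weight_nonneg (G := G)
      fun j => (G.Covered s (M.choice s) j ∧ G.color j ≠ i) ∧ |s.start j - a| < 1]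
  · obtain ⟨t₀, ht₀, hne⟩ := not_forall₂.1 hserve
    have hgain := (weight_color_add_weight_far_le_profit_moveColor hunit ha haT
      (M.choice s)).trans (profit_le_val_s18 s' _)
    have hloss : G.val s' ≤ G.val s := by
      rw [← M.choice_opt s']
      exact (profit_moveColor_le hunit ha haT ht₀ hne).trans (profit_le_val_s18 s _)
    have hsplit := weight_and_add_weight_and_not
      (fun j => G.Covered s (M.choice s) j ∧ G.color j ≠ i) (fun j => |s.start j - a| < 1)
    have hval := weight_and_add_weight_and_not (G.Covered s (M.choice s)) (G.color · = i)
    rw [← profit_eq_weight, M.choice_opt, ← utility_eq_weight] at hval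
    linarith

end UnitJobs

noncomputable def coveredColors (p : G.Profile) (γ : G.Config) : Finset (Fin G.c) :=
  ({j | G.Covered p γ j} : Finset (Fin G.n)).image G.color

lemma profit_le_sum_weight_coveredColors (p : G.Profile) (γ : G.Config) :
    G.profit p γ ≤ ∑ i ∈ coveredColors p γ, G.weight (G.color · = i) := by
  rw [profit_eq_weight, weight,
    ← sum_fiberwise_of_maps_to fun j hj => mem_image_of_mem G.color hj]
  refine sum_le_sum fun i _ => sum_le_sum_of_subset_of_nonneg (fun j hj => ?_)
    fun j _ _ => G.wt_nonneg j
  simp only [mem_filter] at hj ⊢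
  exact ⟨hj.1.1, hj.2⟩

/-- Covered unit jobs of different colors start in different unit intervals `[m, m + 1)`,
and only `⌊T⌋` of these fit into the horizon. -/
lemma card_coveredColors_le_floor (hunit : ∀ j, G.len j = 1) (p : G.Profile) (γ : G.Config) :
    #(coveredColors p γ) ≤ ⌊G.T⌋₊ := by
  rw [← card_range ⌊G.T⌋₊]
  refine card_le_card_of_forall_subsingleton
    (fun i m => ∃ j, G.Covered p γ j ∧ G.color j = i ∧ ⌊p.start j⌋₊ = m) ?_ ?_
  · simp only [coveredColors, mem_image, mem_filter_univ]
    rintro _ ⟨j, hj, rfl⟩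
    refine ⟨_, ?_, j, hj, rfl, rfl⟩
    have hjT := p.start_le j
    rw [hunit] at hjT
    rw [mem_range, Nat.floor_lt (p.start_nonneg j)]
    linarith [Nat.lt_floor_add_one G.T]
  · rintro m - _ ⟨-, j, hj, rfl, rfl⟩ _ ⟨-, j', hj', rfl, hjj'⟩
    refine color_eq_of_covered_of_abs_sub_lt hunit hj hj' ?_
    have := Nat.floor_le (p.start_nonneg j)
    have := Nat.floor_le (p.start_nonneg j')
    have := Nat.lt_floor_add_one (p.start j)
    have := Nat.lt_floor_add_one (p.start j')
    rw [hjj'] at *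
    rw [abs_sub_lt_iff]
    constructor <;> linarith

lemma sum_weight_and_le {ι : Type*} (S : Finset ι) (P : Fin G.n → Prop)
    (R : ι → Fin G.n → Prop) {e : ℕ} (h : ∀ j, #{m ∈ S | R m j} ≤ e) :
    ∑ m ∈ S, G.weight (fun j => P j ∧ R m j) ≤ e * G.weight P := by
  simp only [weight, sum_filter]
  rw [sum_comm, mul_sum]
  refine sum_le_sum fun j _ => ?_
  by_cases hj : P j
  · simp only [hj, true_and, if_true]
    rw [← sum_filter, sum_const, nsmul_eq_mul]
    exact mul_le_mul_of_nonneg_right (by exact_mod_cast h j) (G.wt_nonneg j)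
  · simp [hj]

theorem mul_weight_color_le (hunit : ∀ j, G.len j = 1) {M : G.TieBreak} {s : G.Profile}
    (hNE : G.IsNE M s) {r : ℕ} (hr : 1 ≤ r) (hrT : (r : ℝ) ≤ G.T) (i : Fin G.c) :
    r * G.weight (G.color · = i) ≤ r * G.utility M i s +
      (min r 2 : ℕ) * G.weight fun j => G.Covered s (M.choice s) j ∧ G.color j ≠ i := by
  set U := fun j => G.Covered s (M.choice s) j ∧ G.color j ≠ i
  rcases hr.eq_or_lt with rfl | hr2
  · have hW : G.weight (G.color · = i) ≤
        G.utility M i s + G.weight fun j => U j ∧ |s.start j - 0| < 1 :=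
      weight_color_le_utility_add_weight_near hunit hNE le_rfl (by simpa using hrT)
    have hY := weight_mono (G := G) fun j (hj : U j ∧ |s.start j - 0| < 1) => hj.1
    simp only [Nat.cast_one, one_mul, show min 1 2 = 1 from rfl]
    linarith
  set d := (G.T - 1) / (r - 1)
  have hr' : (1 : ℝ) < r := by exact_mod_cast hr2
  have hd : ((r : ℝ) - 1) * d = G.T - 1 := mul_div_cancel₀ _ (by linarith)
  have hd1 : 1 ≤ d := by rw [le_div_iff₀ (by linarith)]; linarith
  have hwin : ∀ m ∈ range r, 0 ≤ (m : ℝ) * d ∧ (m : ℝ) * d + 1 ≤ G.T := by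
    intro m hm
    have : (m : ℝ) + 1 ≤ r := by exact_mod_cast mem_range.1 hm
    exact ⟨by positivity, by nlinarith⟩
  calc (r : ℝ) * G.weight (G.color · = i) = ∑ m ∈ range r, G.weight (G.color · = i) := by
        simp
    _ ≤ ∑ m ∈ range r, (G.utility M i s +
          G.weight fun j => U j ∧ |s.start j - (m : ℝ) * d| < 1) :=
        sum_le_sum fun m hm =>
          weight_color_le_utility_add_weight_near hunit hNE (hwin m hm).1 (hwin m hm).2
    _ = r * G.utility M i s +
          ∑ m ∈ range r, G.weight fun j => U j ∧ |s.start j - m * d| < 1 := by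
        simp [sum_add_distrib]
    _ ≤ r * G.utility M i s + (min r 2 : ℕ) * G.weight U := by
        rw [min_eq_right hr2]
        gcongr
        exact sum_weight_and_le _ _ _ fun j => card_filter_abs_sub_mul_lt_one_le_two hd1 _ r

lemma sum_utility_le_val (M : G.TieBreak) (s : G.Profile) (C : Finset (Fin G.c)) :
    ∑ i ∈ C, G.utility M i s ≤ G.val s := by
  rw [← M.choice_opt, profit_eq_weight, weight]
  refine le_of_eq_of_le (sum_congr rfl fun i _ => ?_)
    (sum_fiberwise_le_sum_of_sum_fiber_nonneg (g := G.color) fun _ _ =>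
      sum_nonneg fun j _ => G.wt_nonneg j)
  rw [utility_eq_weight, weight]
  congr 1
  ext j
  simp

lemma utility_add_weight_other_colors (M : G.TieBreak) (s : G.Profile) (i : Fin G.c) :
    (G.utility M i s + G.weight fun j => G.Covered s (M.choice s) j ∧ G.color j ≠ i) =
      G.val s := by
  rw [utility_eq_weight, weight_and_add_weight_and_not, ← profit_eq_weight, M.choice_opt]

theorem profit_le_three_sub_two_div_mul_val (hunit : ∀ j, G.len j = 1) {M : G.TieBreak}
    {s : G.Profile} (hNE : G.IsNE M s) {r : ℕ} (hr : 1 ≤ r) (hrT : (r : ℝ) ≤ G.T)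
    {p : G.Profile} {γ : G.Config} (hC : #(coveredColors p γ) ≤ r) :
    G.profit p γ ≤ (3 - 2 / r) * G.val s :=
  (profit_le_sum_weight_coveredColors p γ).trans <|
    sum_le_three_sub_two_div_mul (u := (G.utility M · s)) hr hC
      (fun i _ => utility_eq_weight M i s ▸ weight_nonneg _) (sum_utility_le_val M s _)
      (fun i _ => utility_add_weight_other_colors M s i)
      fun i _ => mul_weight_color_le hunit hNE hr hrT i

theorem valOPT_le_three_sub_two_div_mul_val (hunit : ∀ j, G.len j = 1) (hT : 1 ≤ G.T)
    {M : G.TieBreak} {s : G.Profile} (hNE : G.IsNE M s) {m : ℕ}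
    (hm : min ⌊G.T⌋₊ G.c ≤ m) :
    G.valOPT ≤ (3 - 2 / m) * G.val s := by
  have hm0 : 0 ≤ 3 - 2 / (m : ℝ) := by
    rcases m.eq_zero_or_pos with rfl | hm
    · norm_num
    · linarith [div_le_self zero_le_two (Nat.one_le_cast.2 hm : (1 : ℝ) ≤ m)]
  refine valOPT_le_of_forall_profit_le (mul_nonneg hm0 (val_nonneg s)) fun p γ => ?_
  have hr : 1 ≤ min ⌊G.T⌋₊ G.c := le_min ((Nat.one_le_floor_iff _).2 hT) (γ 0).pos
  have hrT : ((min ⌊G.T⌋₊ G.c : ℕ) : ℝ) ≤ G.T :=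
    (Nat.cast_le.2 (min_le_left _ _)).trans (Nat.floor_le (by linarith))
  have hC : #(coveredColors p γ) ≤ min ⌊G.T⌋₊ G.c :=
    le_min (card_coveredColors_le_floor hunit p γ) ((card_le_univ _).trans_eq (Fintype.card_fin _))
  calc G.profit p γ ≤ (3 - 2 / ((min ⌊G.T⌋₊ G.c : ℕ) : ℝ)) * G.val s :=
        profit_le_three_sub_two_div_mul_val hunit hNE hr hrT hC
    _ ≤ (3 - 2 / (m : ℝ)) * G.val s := by
        gcongr
        exact val_nonneg s

end Game

/-- For unit-length games with `T ≥ 1` and `k = ⌊T⌋`, the price of anarchy is at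
most `min (3 - 2/k) (3 - 2/c)`. -/
theorem unit_PoA_bound (G : Game) (hunit : ∀ j, G.len j = 1) (hT : 1 ≤ G.T)
    (M : G.TieBreak) (s : G.Profile) (hNE : G.IsNE M s) :
    G.valOPT ≤ (3 - 2 / (⌊G.T⌋₊ : ℝ)) * G.val s ∧
    G.valOPT ≤ (3 - 2 / (G.c : ℝ)) * G.val s :=
  ⟨Game.valOPT_le_three_sub_two_div_mul_val hunit hT hNE (min_le_left _ _),
    Game.valOPT_le_three_sub_two_div_mul_val hunit hT hNE (min_le_right _ _)⟩
end
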